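/- In the aⁿbⁿ-shift, a word w ∈ L(X_ab) is synchronizing if and only if 'ba' occurs in w as a contiguous subword. In particular, for i, j ≥ 1 the word aⁱbʲ is not synchronizing: if i ≤ j then (b a^{j-i}, a) and (b a^{j-i+1}, ba) lie in E(aⁱbʲ) but (b a^{j-i}, ba) does not. -/

import Mathlib

/-- `w` occurs as a (contiguous) factor of the bi-infinite sequence `x`. -/
def IsFactor {A : Type*} (w : List A) (x : ℤ → A) : Prop :=
  ∃ k : ℤ, ∀ i : Fin w.length, x (k + (i : ℕ)) = w.get i

/-- The language of a shift space `X ⊆ A^ℤ`: all finite words occurring in elements of `X`. -/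
def Lang {A : Type*} (X : Set (ℤ → A)) : Set (List A) :=
  {w | ∃ x ∈ X, IsFactor w x}

/-- The context of a word `w` relative to a language `L`:
`E(w) = {(a,b) : a ++ w ++ b ∈ L}`. -/
def Ctx {A : Type*} (L : Set (List A)) (w : List A) : Set (List A × List A) :=
  {p | p.1 ++ w ++ p.2 ∈ L}

/-- `w` is a synchronizing word for the language `L`: whenever `u ++ w ∈ L` and
`w ++ v ∈ L`, also `u ++ w ++ v ∈ L`. -/
def SyncWord {A : Type*} (L : Set (List A)) (w : List A) : Prop :=
  ∀ u v : List A, u ++ w ∈ L → w ++ v ∈ L → u ++ w ++ v ∈ L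

/-- The basic blocks `aⁿbⁿ` (with `a = 0`, `b = 1`), `n ≥ 1`. -/
def abBlocks : Set (List (Fin 2)) :=
  {w | ∃ n : ℕ, 1 ≤ n ∧ w = List.replicate n (0 : Fin 2) ++ List.replicate n 1}

/-- Finite concatenations of the blocks `aⁿbⁿ`. -/
def abConcat : Set (List (Fin 2)) :=
  {z | ∃ L : List (List (Fin 2)), (∀ w ∈ L, w ∈ abBlocks) ∧ z = L.flatten}

/-- The language of the `aⁿbⁿ`-shift: all factors of concatenations of the blocks. -/
def LangAB : Set (List (Fin 2)) :=
  {w | ∃ z ∈ abConcat, w <:+: z}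

/-!
Every block `aⁿbⁿ` is sorted, so an occurrence of `ba` in a concatenation of blocks always sits
on a block boundary; cutting there and regluing shows that every word containing `ba` is
synchronizing. A word without `ba` is `aⁱbʲ`, a factor of a block `aᴺbᴺ`, and synchronization
passes from a word to the words containing it. The block is not synchronizing because
`baᴺbᴺ⁺¹` is not in the language: after the cut at its `ba`, the first block `aᴺbᴺ` would be
followed by a `b`.
-/

open List

theorem replicate_append_cons_inj {α : Type*} {a b : α} (hab : a ≠ b) :
    ∀ {m n : ℕ} {x y : List α},
      replicate m a ++ b :: x = replicate n a ++ b :: y → m = n ∧ x = y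
  | 0, 0, _, _, h => by simpa using h
  | 0, _ + 1, _, _, h => by simp [replicate_succ] at h; exact absurd h.1 hab.symm
  | _ + 1, 0, _, _, h => by simp [replicate_succ] at h; exact absurd h.1 hab
  | _ + 1, _ + 1, _, _, h => by
    simp only [replicate_succ, cons_append, cons.injEq, true_and] at h
    simpa using replicate_append_cons_inj hab h

theorem not_infix_one_zero_iff {w : List (Fin 2)} :
    ¬ [1, 0] <:+: w ↔ ∃ i j, w = replicate i 0 ++ replicate j 1 := by
  constructor
  · induction w with
    | nil => exact fun _ => ⟨0, 0, rfl⟩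
    | cons x w ih =>
      intro h
      obtain ⟨i, j, rfl⟩ := ih fun hw => h (hw.trans (suffix_cons x w).isInfix)
      match x, i with
      | 0, i => exact ⟨i + 1, j, rfl⟩
      | 1, 0 => exact ⟨0, j + 1, rfl⟩
      | 1, i + 1 => exact absurd ⟨[], replicate i 0 ++ replicate j 1, rfl⟩ h
  · rintro ⟨i, j, rfl⟩ h
    have hsorted : (replicate i (0 : Fin 2) ++ replicate j 1).Pairwise (· ≤ ·) :=
      pairwise_append.2 ⟨pairwise_replicate.2 (.inr le_rfl), pairwise_replicate.2 (.inr le_rfl),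
        fun x hx y hy => by rw [eq_of_mem_replicate hx, eq_of_mem_replicate hy]; decide⟩
    simpa using hsorted.sublist h.sublist

section Synchronizing

variable {α : Type*} {L : Set (List α)}

def IsFactorClosed (L : Set (List α)) : Prop :=
  ∀ ⦃v w : List α⦄, v <:+: w → w ∈ L → v ∈ L

theorem SyncWord.append_append (hL : IsFactorClosed L) {w : List α} (hw : SyncWord L w)
    (p q : List α) : SyncWord L (p ++ w ++ q) := by
  intro u v hu hv
  simpa using hw (u ++ p) (q ++ v) (hL ⟨[], q, by simp⟩ hu) (hL ⟨p, [], by simp⟩ hv)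

theorem not_syncWord_of_mem_ctx (hL : IsFactorClosed L) {w u v u' v' : List α}
    (h₁ : (u, v') ∈ Ctx L w) (h₂ : (u', v) ∈ Ctx L w) (h : (u, v) ∉ Ctx L w) :
    ¬ SyncWord L w :=
  fun hw => h (hw u v (hL ⟨[], v', rfl⟩ h₁) (hL ⟨u', [], by simp⟩ h₂))

end Synchronizing

theorem isFactorClosed_langAB : IsFactorClosed LangAB :=
  fun _ _ h ⟨z, hz, hwz⟩ => ⟨z, hz, h.trans hwz⟩

theorem block_mem_abConcat {n : ℕ} (hn : 1 ≤ n) :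
    replicate n (0 : Fin 2) ++ replicate n 1 ∈ abConcat :=
  ⟨[replicate n 0 ++ replicate n 1], by simpa using ⟨n, hn, rfl⟩, by simp⟩

theorem abConcat_append {x y : List (Fin 2)} (hx : x ∈ abConcat) (hy : y ∈ abConcat) :
    x ++ y ∈ abConcat := by
  obtain ⟨L₁, h₁, rfl⟩ := hx
  obtain ⟨L₂, h₂, rfl⟩ := hy
  exact ⟨L₁ ++ L₂, by simpa [or_imp, forall_and] using ⟨h₁, h₂⟩,
    (flatten_append ..).symm⟩

theorem cons_one_not_mem_abConcat (t : List (Fin 2)) : 1 :: t ∉ abConcat := by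
  rintro ⟨_ | ⟨B, Bs⟩, hL, h⟩
  · simp at h
  · obtain ⟨n, hn, rfl⟩ := hL B mem_cons_self
    obtain ⟨k, rfl⟩ := Nat.exists_eq_add_of_le' hn
    simp [replicate_succ] at h

theorem abConcat_split_one_zero {s t : List (Fin 2)} (h : s ++ 1 :: 0 :: t ∈ abConcat) :
    s ++ [1] ∈ abConcat ∧ 0 :: t ∈ abConcat := by
  obtain ⟨L, hL, hflat⟩ := h
  induction L generalizing s with
  | nil => simp at hflat
  | cons B Bs ih =>
    have hBs : ∀ w ∈ Bs, w ∈ abBlocks := fun w hw => hL w (mem_cons_of_mem B hw)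
    obtain ⟨n, hn, rfl⟩ := hL B mem_cons_self
    rw [flatten_cons] at hflat
    rcases append_eq_append_iff.1 hflat with ⟨l, hB, hl⟩ | ⟨l, rfl, hl⟩
    · match l, hl with
      | [], hl => exact absurd ⟨Bs, hBs, hl⟩ (cons_one_not_mem_abConcat _)
      | [_], hl =>
        simp only [cons_append, nil_append, cons.injEq] at hl
        obtain ⟨rfl, hl⟩ := hl
        exact ⟨hB ▸ block_mem_abConcat hn, ⟨Bs, hBs, hl⟩⟩
      | _ :: _ :: l, hl =>
        simp only [cons_append, cons.injEq] at hl
        obtain ⟨rfl, rfl, -⟩ := hl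
        exact absurd ⟨s, l, by simp [hB]⟩ (not_infix_one_zero_iff.2 ⟨n, n, rfl⟩)
    · obtain ⟨hl₁, hl₂⟩ := ih hBs hl.symm
      exact ⟨by simpa using abConcat_append (block_mem_abConcat hn) hl₁, hl₂⟩

theorem replicate_append_replicate_succ_append_not_mem_abConcat (n : ℕ) (t : List (Fin 2)) :
    replicate n 0 ++ replicate (n + 1) 1 ++ t ∉ abConcat := by
  rintro ⟨_ | ⟨B, Bs⟩, hL, h⟩
  · simp at h
  · obtain ⟨m, hm, rfl⟩ := hL B mem_cons_self
    obtain ⟨m, rfl⟩ := Nat.exists_eq_add_of_le' hm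
    simp only [flatten_cons, append_assoc, replicate_succ (a := (1 : Fin 2)), cons_append] at h
    obtain ⟨rfl, h⟩ := replicate_append_cons_inj (show (0 : Fin 2) ≠ 1 by decide) h
    rw [replicate_succ', append_assoc, append_cancel_left_eq] at h
    exact cons_one_not_mem_abConcat t ⟨Bs, fun w hw => hL w (mem_cons_of_mem _ hw), h⟩

theorem cons_one_replicate_append_replicate_succ_not_mem_langAB {n : ℕ} (hn : 1 ≤ n) :
    1 :: (replicate n (0 : Fin 2) ++ replicate (n + 1) 1) ∉ LangAB := by
  rintro ⟨z, hz, s, t, rfl⟩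
  obtain ⟨n, rfl⟩ := Nat.exists_eq_add_of_le' hn
  have h := (abConcat_split_one_zero (s := s) (t := replicate n 0 ++ replicate (n + 2) 1 ++ t)
    (by simpa [replicate_succ] using hz)).2
  exact replicate_append_replicate_succ_append_not_mem_abConcat (n + 1) t
    (by simpa [replicate_succ] using h)

theorem cons_one_block_append_zero_mem_langAB {n : ℕ} (hn : 1 ≤ n) :
    1 :: (replicate n (0 : Fin 2) ++ replicate n 1 ++ [0]) ∈ LangAB :=
  ⟨_, abConcat_append (block_mem_abConcat le_rfl)
      (abConcat_append (block_mem_abConcat hn) (block_mem_abConcat le_rfl)),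
    [0], [1], by simp⟩

theorem syncWord_langAB_of_infix_one_zero {w : List (Fin 2)} (h : [1, 0] <:+: w) :
    SyncWord LangAB w := by
  obtain ⟨p, q, rfl⟩ := h
  rintro u v ⟨z₁, hz₁, s₁, t₁, hu⟩ ⟨z₂, hz₂, s₂, t₂, hv⟩
  have h₁ := (abConcat_split_one_zero (s := s₁ ++ u ++ p) (t := q ++ t₁)
    (by simpa [← hu] using hz₁)).1
  have h₂ := (abConcat_split_one_zero (s := s₂ ++ p) (t := q ++ v ++ t₂)
    (by simpa [← hv] using hz₂)).2
  exact ⟨_, abConcat_append h₁ h₂, s₁, t₂, by simp⟩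

theorem ctx_langAB_replicate_append_replicate {i j : ℕ} (hi : 1 ≤ i) (hij : i ≤ j) :
    (1 :: replicate (j - i) 0, [0]) ∈ Ctx LangAB (replicate i 0 ++ replicate j 1) ∧
    (1 :: replicate (j - i + 1) 0, [1, 0]) ∈ Ctx LangAB (replicate i 0 ++ replicate j 1) ∧
    (1 :: replicate (j - i) 0, [1, 0]) ∉ Ctx LangAB (replicate i 0 ++ replicate j 1) := by
  obtain ⟨k, rfl⟩ := Nat.exists_eq_add_of_le hij
  have hzeros (m : ℕ) (l : List (Fin 2)) :
      1 :: replicate m 0 ++ (replicate i 0 ++ l) = 1 :: (replicate (m + i) 0 ++ l) := by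
    rw [cons_append, ← append_assoc, replicate_append_replicate]
  simp only [Ctx, Set.mem_ofPred_eq, Nat.add_sub_cancel_left, hzeros]
  refine ⟨?_, ?_, ?_⟩
  · simpa [add_comm k i] using cons_one_block_append_zero_mem_langAB (n := i + k) (by omega)
  · rw [show k + 1 + i = i + k + 1 by omega]
    simpa [replicate_succ'] using
      cons_one_block_append_zero_mem_langAB (n := i + k + 1) (by omega)
  · intro h
    refine cons_one_replicate_append_replicate_succ_not_mem_langAB (n := i + k) (by omega)
      (isFactorClosed_langAB ⟨[], [0], ?_⟩ h)
    simp [add_comm k i, replicate_succ']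

theorem not_syncWord_langAB_replicate_append_replicate (i j : ℕ) :
    ¬ SyncWord LangAB (replicate i (0 : Fin 2) ++ replicate j 1) := by
  intro hw
  have hblock : replicate (j + 1) 0 ++ (replicate i 0 ++ replicate j 1) ++ replicate (i + 1) 1 =
      replicate (i + j + 1) (0 : Fin 2) ++ replicate (i + j + 1) 1 := by
    rw [← append_assoc, replicate_append_replicate, append_assoc, replicate_append_replicate,
      show j + 1 + i = i + j + 1 by omega, show j + (i + 1) = i + j + 1 by omega]
  have hN := hw.append_append isFactorClosed_langAB (replicate (j + 1) 0) (replicate (i + 1) 1)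
  rw [hblock] at hN
  obtain ⟨h₁, h₂, h₃⟩ := ctx_langAB_replicate_append_replicate (i := i + j + 1) (by omega) le_rfl
  exact not_syncWord_of_mem_ctx isFactorClosed_langAB h₁ h₂ h₃ hN

/-- A word of the `aⁿbⁿ`-shift is synchronizing iff it contains `ba` as a contiguous
subword; in particular, for `i, j ≥ 1` with `i ≤ j` the word `aⁱbʲ` is not
synchronizing: `(b a^{j-i}, a)` and `(b a^{j-i+1}, ba)` lie in `E(aⁱbʲ)` while
`(b a^{j-i}, ba)` does not. (Here `a = 0` and `b = 1`.) -/
theorem ab_shift_sync_iff :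
    (∀ w : List (Fin 2), w ∈ LangAB → (SyncWord LangAB w ↔ [(1 : Fin 2), 0] <:+: w)) ∧
    (∀ i j : ℕ, 1 ≤ i → i ≤ j →
      ((1 : Fin 2) :: List.replicate (j - i) 0, [(0 : Fin 2)]) ∈
        Ctx LangAB (List.replicate i (0 : Fin 2) ++ List.replicate j 1) ∧
      ((1 : Fin 2) :: List.replicate (j - i + 1) 0, [(1 : Fin 2), 0]) ∈
        Ctx LangAB (List.replicate i (0 : Fin 2) ++ List.replicate j 1) ∧
      ((1 : Fin 2) :: List.replicate (j - i) 0, [(1 : Fin 2), 0]) ∉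
        Ctx LangAB (List.replicate i (0 : Fin 2) ++ List.replicate j 1) ∧
      ¬ SyncWord LangAB (List.replicate i (0 : Fin 2) ++ List.replicate j 1)) := by
  refine ⟨fun w _ => ⟨fun hw => ?_, syncWord_langAB_of_infix_one_zero⟩, fun i j hi hij => ?_⟩
  · by_contra h
    obtain ⟨i, j, rfl⟩ := not_infix_one_zero_iff.1 h
    exact not_syncWord_langAB_replicate_append_replicate i j hw
  · obtain ⟨h₁, h₂, h₃⟩ := ctx_langAB_replicate_append_replicate hi hij
    exact ⟨h₁, h₂, h₃, not_syncWord_of_mem_ctx isFactorClosed_langAB h₁ h₂ h₃⟩
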